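/- arXiv:math/0206001 — 5 statements merged into one kernel-verified Lean document; each statement's English description precedes it below -/
import Mathlib

section
/- Let k₀ be a commutative ring, let k be a k₀-algebra which is free as a k₀-module, let Γ be a group, and let M and N be modules over the group algebra k₀[Γ]. Then the canonical k-linear homomorphism k ⊗_{k₀} Hom_{k₀[Γ]}(M, N) → Hom_{k[Γ]}(k ⊗_{k₀} M, k ⊗_{k₀} N), sending α ⊗ φ to the map β ⊗ m ↦ αβ ⊗ φ(m), is injective. -/
open TensorProduct

/-- The module of `Γ`-equivariant linear maps, i.e. `Hom_{k₀[Γ]}(M, N)`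
(a `k₀[Γ]`-module homomorphism between representations is exactly an equivariant
`k₀`-linear map). -/
def equivariantHom {k : Type} [CommRing k] {Γ : Type} [Monoid Γ]
    {M N : Type} [AddCommGroup M] [Module k M] [AddCommGroup N] [Module k N]
    (ρ : Representation k Γ M) (ν : Representation k Γ N) :
    Submodule k (M →ₗ[k] N) where
  carrier := {f | ∀ (γ : Γ) (m : M), f (ρ γ m) = ν γ (f m)}
  add_mem' := by intro f g hf hg γ m; simp [hf γ m, hg γ m]
  zero_mem' := by intro γ m; simp
  smul_mem' := by intro c f hf γ m; simp [hf γ m]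

/-- Base change of a representation along a ring extension `k₀ → k`,
i.e. the representation of `Γ` on `k ⊗[k₀] V`, with `Γ` acting through the second factor. -/
noncomputable def Representation.tensorUp
    (k₀ k : Type) [CommRing k₀] [CommRing k] [Algebra k₀ k]
    {Γ : Type} [Monoid Γ] {V : Type} [AddCommGroup V] [Module k₀ V]
    (ρ : Representation k₀ Γ V) : Representation k Γ (k ⊗[k₀] V) :=
  (Module.End.baseChangeHom k₀ k V).toRingHom.toMonoidHom.comp ρ

lemma Representation.tensorUp_apply
    (k₀ k : Type) [CommRing k₀] [CommRing k] [Algebra k₀ k]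
    {Γ : Type} [Monoid Γ] {V : Type} [AddCommGroup V] [Module k₀ V]
    (ρ : Representation k₀ Γ V) (γ : Γ) :
    ρ.tensorUp k₀ k γ = (ρ γ).baseChange k := rfl

section canonical

variable (k₀ k : Type) [CommRing k₀] [CommRing k] [Algebra k₀ k]
variable {Γ : Type} [Monoid Γ]
variable {M N : Type} [AddCommGroup M] [Module k₀ M] [AddCommGroup N] [Module k₀ N]
variable (ρ : Representation k₀ Γ M) (ν : Representation k₀ Γ N)

/-- The canonical map `k ⊗[k₀] Hom_{k₀[Γ]}(M, N) →ₗ[k] Hom_k(k ⊗ M, k ⊗ N)`,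
sending `α ⊗ φ` to the map `β ⊗ m ↦ αβ ⊗ φ m`. -/
noncomputable def canonicalBaseChange :
    (k ⊗[k₀] ↥(equivariantHom ρ ν)) →ₗ[k] ((k ⊗[k₀] M) →ₗ[k] (k ⊗[k₀] N)) :=
  LinearMap.liftBaseChange k
    ((LinearMap.baseChangeHom k₀ k M N).comp (equivariantHom ρ ν).subtype)

lemma canonicalBaseChange_mem (x : k ⊗[k₀] ↥(equivariantHom ρ ν)) :
    canonicalBaseChange k₀ k ρ ν x ∈
      equivariantHom (ρ.tensorUp k₀ k) (ν.tensorUp k₀ k) := by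
  induction x using TensorProduct.induction_on with
  | zero => simpa using (equivariantHom (ρ.tensorUp k₀ k) (ν.tensorUp k₀ k)).zero_mem
  | add x y hx hy =>
      simpa using (equivariantHom (ρ.tensorUp k₀ k) (ν.tensorUp k₀ k)).add_mem hx hy
  | tmul a f =>
      intro γ m
      have hf : (f : M →ₗ[k₀] N) ∘ₗ (ρ γ) = (ν γ) ∘ₗ (f : M →ₗ[k₀] N) :=
        LinearMap.ext fun m => f.2 γ m
      have h2 : ((f : M →ₗ[k₀] N).baseChange k) ∘ₗ ((ρ γ).baseChange k)
          = ((ν γ).baseChange k) ∘ₗ ((f : M →ₗ[k₀] N).baseChange k) := by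
        rw [← LinearMap.baseChange_comp, ← LinearMap.baseChange_comp, hf]
      simp only [canonicalBaseChange, LinearMap.liftBaseChange_tmul, LinearMap.coe_comp,
        Function.comp_apply, Submodule.coe_subtype, LinearMap.baseChangeHom_apply,
        LinearMap.smul_apply, Representation.tensorUp_apply, map_smul]
      exact congrArg (a • ·) (LinearMap.congr_fun h2 m)

/-- The canonical map `k ⊗[k₀] Hom_{k₀[Γ]}(M, N) →ₗ[k] Hom_{k[Γ]}(k ⊗ M, k ⊗ N)`,
sending `α ⊗ φ` to the map `β ⊗ m ↦ αβ ⊗ φ m`. -/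
noncomputable def canonicalBaseChangeRes :
    (k ⊗[k₀] ↥(equivariantHom ρ ν)) →ₗ[k]
      ↥(equivariantHom (ρ.tensorUp k₀ k) (ν.tensorUp k₀ k)) :=
  LinearMap.codRestrict _ (canonicalBaseChange k₀ k ρ ν) (canonicalBaseChange_mem k₀ k ρ ν)

end canonical

/-! Evaluating at `1 ⊗ m` reduces the claim to the evaluation maps `Hom(M, N) → N`, which are
jointly injective; tensoring with a free module `k` keeps them jointly injective, because in a
basis of `k` an element of `k ⊗ P` is zero exactly when all its coordinates in `P` are. -/

section FreeBaseChange

variable {R A : Type*} [CommSemiring R] [AddCommMonoid A] [Module R A]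
variable {P Q : Type*} [AddCommMonoid P] [Module R P] [AddCommMonoid Q] [Module R Q]

lemma TensorProduct.equivFinsuppOfBasisLeft_lTensor {ι : Type*} [DecidableEq ι]
    (b : Module.Basis ι R A) (f : P →ₗ[R] Q) (x : A ⊗[R] P) (i : ι) :
    equivFinsuppOfBasisLeft b (f.lTensor A x) i = f (equivFinsuppOfBasisLeft b x i) := by
  induction x using TensorProduct.induction_on with
  | zero => simp
  | add x y hx hy => simp only [map_add, Finsupp.add_apply, hx, hy]
  | tmul a p => simp

lemma LinearMap.eq_zero_of_forall_lTensor_eq_zero [Module.Free R A] {J : Type*}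
    {f : J → P →ₗ[R] Q} (hf : ∀ p, (∀ j, f j p = 0) → p = 0)
    {x : A ⊗[R] P} (hx : ∀ j, (f j).lTensor A x = 0) : x = 0 := by
  classical
  let e := equivFinsuppOfBasisLeft (Module.Free.chooseBasis R A) (N := P)
  suffices e x = 0 from e.map_eq_zero_iff.mp this
  ext i
  refine hf _ fun j => ?_
  rw [← equivFinsuppOfBasisLeft_lTensor, hx j, map_zero, Finsupp.zero_apply]

end FreeBaseChange

variable {k₀ k : Type} [CommRing k₀] [CommRing k] [Algebra k₀ k]
variable {Γ : Type} [Monoid Γ]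
variable {M N : Type} [AddCommGroup M] [Module k₀ M] [AddCommGroup N] [Module k₀ N]
variable {ρ : Representation k₀ Γ M} {ν : Representation k₀ Γ N}

lemma canonicalBaseChange_apply_one_tmul (x : k ⊗[k₀] ↥(equivariantHom ρ ν)) (m : M) :
    canonicalBaseChange k₀ k ρ ν x (1 ⊗ₜ m)
      = ((LinearMap.applyₗ m).comp (equivariantHom ρ ν).subtype).lTensor k x := by
  induction x using TensorProduct.induction_on with
  | zero => simp
  | add x y hx hy => simp only [map_add, LinearMap.add_apply, hx, hy]
  | tmul a f => simp [canonicalBaseChange, TensorProduct.smul_tmul']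

lemma canonicalBaseChange_injective [Module.Free k₀ k] :
    Function.Injective (canonicalBaseChange k₀ k ρ ν) := by
  refine (injective_iff_map_eq_zero _).mpr fun x hx => ?_
  refine LinearMap.eq_zero_of_forall_lTensor_eq_zero
    (f := fun m => (LinearMap.applyₗ m).comp (equivariantHom ρ ν).subtype)
    (fun f hf => ?_) fun m => ?_
  · exact Subtype.ext (LinearMap.ext hf)
  · rw [← canonicalBaseChange_apply_one_tmul x m, hx, LinearMap.zero_apply]

/-- for `k` a `k₀`-algebra free as a `k₀`-module and representations `M`, `N`
of a group `Γ` over `k₀`, the canonical map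
`k ⊗[k₀] Hom_{k₀[Γ]}(M, N) → Hom_{k[Γ]}(k ⊗ M, k ⊗ N)` is injective. -/
theorem statement_2 (k₀ : Type) [CommRing k₀] (k : Type) [CommRing k] [Algebra k₀ k]
    [Module.Free k₀ k] (Γ : Type) [Group Γ]
    (M N : Type) [AddCommGroup M] [Module k₀ M] [AddCommGroup N] [Module k₀ N]
    (ρ : Representation k₀ Γ M) (ν : Representation k₀ Γ N) :
    Function.Injective (canonicalBaseChangeRes k₀ k ρ ν) :=
  fun _ _ h => canonicalBaseChange_injective (congrArg Subtype.val h)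
end

section
/- Let k₀ be a commutative ring, let k be a k₀-algebra which is free as a k₀-module, let Γ be a group, and let M and N be modules over the group algebra k₀[Γ]. If M is finitely generated as a left k₀[Γ]-module, then the canonical k-linear homomorphism k ⊗_{k₀} Hom_{k₀[Γ]}(M, N) → Hom_{k[Γ]}(k ⊗_{k₀} M, k ⊗_{k₀} N), sending α ⊗ φ to the map β ⊗ m ↦ αβ ⊗ φ(m), is surjective (and hence bijective). -/
open TensorProduct

/-!
Choose a `k₀`-basis `(b i)` of `k`, so that `k ⊗ N ≃ (ι →₀ N)`. For a `Γ`-equivariant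
`F : k ⊗ M → k ⊗ N`, the `i`-th coordinate of `m ↦ F (1 ⊗ m)` is an equivariant map
`φ i : M → N`, and `F = ∑ b i ⊗ φ i`. This sum is finite: an equivariant map is
`k₀[Γ]`-linear, so it vanishes as soon as it vanishes on a finite generating set of `M`,
and the values of `F` on such a set have only finitely many nonzero coordinates.
-/

open Representation

section Coordinates

variable {k₀ k : Type*} [CommRing k₀] [CommRing k] [Algebra k₀ k]
variable {N N' : Type*} [AddCommGroup N] [Module k₀ N] [AddCommGroup N'] [Module k₀ N']
variable {ι : Type*} [DecidableEq ι] (b : Module.Basis ι k₀ k)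

lemma equivFinsuppOfBasisLeft_baseChange_apply (g : N →ₗ[k₀] N') (x : k ⊗[k₀] N) (i : ι) :
    equivFinsuppOfBasisLeft b (g.baseChange k x) i = g (equivFinsuppOfBasisLeft b x i) := by
  induction x using TensorProduct.induction_on with
  | zero => simp
  | tmul β n => simp
  | add x y hx hy => simp [hx, hy]

lemma eq_sum_tmul_equivFinsuppOfBasisLeft {x : k ⊗[k₀] N} {T : Finset ι}
    (hT : ∀ i ∉ T, equivFinsuppOfBasisLeft b x i = 0) :
    x = ∑ i ∈ T, b i ⊗ₜ equivFinsuppOfBasisLeft b x i := by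
  conv_lhs => rw [← (equivFinsuppOfBasisLeft b).symm_apply_apply x,
    equivFinsuppOfBasisLeft_symm_apply]
  refine Finsupp.sum_of_support_subset _ (fun i hi => ?_) _ (fun i _ => tmul_zero _ _)
  by_contra hiT
  exact Finsupp.mem_support_iff.mp hi (hT i hiT)

end Coordinates

section Equivariant

variable {k₀ : Type} [CommRing k₀] {Γ : Type} [Monoid Γ]
variable {M N : Type} [AddCommGroup M] [Module k₀ M] [AddCommGroup N] [Module k₀ N]
variable {ρ : Representation k₀ Γ M} {ν : Representation k₀ Γ N}

lemma eq_zero_of_mem_equivariantHom_of_span_eq_top {f : M →ₗ[k₀] N}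
    (hf : f ∈ equivariantHom ρ ν) {S : Set ρ.asModule}
    (hS : Submodule.span (MonoidAlgebra k₀ Γ) S = ⊤)
    (hfS : ∀ s ∈ S, f (ρ.asModuleEquiv s) = 0) : f = 0 := by
  have hzero : IntertwiningMap.equivLinearMapAsModule ρ ν
      (f.intertwiningMap_of_isIntertwiningMap ρ ν hf) = 0 :=
    LinearMap.ext_on hS hfS
  ext m
  exact LinearMap.congr_fun hzero (ρ.asModuleEquiv.symm m)

end Equivariant

section BaseChange

variable {k₀ k : Type} [CommRing k₀] [CommRing k] [Algebra k₀ k]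
variable {Γ : Type} [Monoid Γ]
variable {M N : Type} [AddCommGroup M] [Module k₀ M] [AddCommGroup N] [Module k₀ N]
variable {ρ : Representation k₀ Γ M} {ν : Representation k₀ Γ N}

lemma canonicalBaseChange_tmul_apply_one_tmul (a : k) (f : equivariantHom ρ ν) (m : M) :
    canonicalBaseChange k₀ k ρ ν (a ⊗ₜ f) (1 ⊗ₜ m) = a ⊗ₜ f.1 m := by
  simp [canonicalBaseChange, smul_tmul']

variable {ι : Type} [DecidableEq ι] (b : Module.Basis ι k₀ k)

noncomputable def baseChangeCoord (F : k ⊗[k₀] M →ₗ[k] k ⊗[k₀] N) (i : ι) : M →ₗ[k₀] N :=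
  Finsupp.lapply i ∘ₗ (equivFinsuppOfBasisLeft b).toLinearMap ∘ₗ F.restrictScalars k₀ ∘ₗ
    TensorProduct.mk k₀ k M 1

lemma baseChangeCoord_apply (F : k ⊗[k₀] M →ₗ[k] k ⊗[k₀] N) (i : ι) (m : M) :
    baseChangeCoord b F i m = equivFinsuppOfBasisLeft b (F (1 ⊗ₜ m)) i := rfl

lemma baseChangeCoord_mem_equivariantHom {F : k ⊗[k₀] M →ₗ[k] k ⊗[k₀] N}
    (hF : F ∈ equivariantHom (ρ.tensorUp k₀ k) (ν.tensorUp k₀ k)) (i : ι) :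
    baseChangeCoord b F i ∈ equivariantHom ρ ν := by
  intro γ m
  have h := hF γ (1 ⊗ₜ m)
  rw [tensorUp_apply, tensorUp_apply, LinearMap.baseChange_tmul] at h
  rw [baseChangeCoord_apply, baseChangeCoord_apply, h, equivFinsuppOfBasisLeft_baseChange_apply]

lemma exists_finset_baseChangeCoord_eq_zero [Module.Finite (MonoidAlgebra k₀ Γ) ρ.asModule]
    {F : k ⊗[k₀] M →ₗ[k] k ⊗[k₀] N}
    (hF : F ∈ equivariantHom (ρ.tensorUp k₀ k) (ν.tensorUp k₀ k)) :
    ∃ T : Finset ι, ∀ i ∉ T, baseChangeCoord b F i = 0 := by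
  obtain ⟨S, hS⟩ := Module.Finite.fg_top (R := MonoidAlgebra k₀ Γ) (M := ρ.asModule)
  refine ⟨S.biUnion fun s => (equivFinsuppOfBasisLeft b (F (1 ⊗ₜ ρ.asModuleEquiv s))).support,
    fun i hi => eq_zero_of_mem_equivariantHom_of_span_eq_top
      (baseChangeCoord_mem_equivariantHom b hF i) hS fun s hs => ?_⟩
  by_contra hne
  exact hi (Finset.mem_biUnion.mpr ⟨s, hs, Finsupp.mem_support_iff.mpr hne⟩)

end BaseChange

/-- for `k` a `k₀`-algebra free as a `k₀`-module and representations `M`, `N`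
of a group `Γ` over `k₀`, with `M` finitely generated as a `k₀[Γ]`-module, the canonical map
`k ⊗[k₀] Hom_{k₀[Γ]}(M, N) → Hom_{k[Γ]}(k ⊗ M, k ⊗ N)` is surjective. -/
theorem statement_3 (k₀ : Type) [CommRing k₀] (k : Type) [CommRing k] [Algebra k₀ k]
    [Module.Free k₀ k] (Γ : Type) [Group Γ]
    (M N : Type) [AddCommGroup M] [Module k₀ M] [AddCommGroup N] [Module k₀ N]
    (ρ : Representation k₀ Γ M) (ν : Representation k₀ Γ N)
    (hM : Module.Finite (MonoidAlgebra k₀ Γ) ρ.asModule) :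
    Function.Surjective (canonicalBaseChangeRes k₀ k ρ ν) := by
  classical
  rintro ⟨F, hF⟩
  let b := Module.Free.chooseBasis k₀ k
  obtain ⟨T, hT⟩ := exists_finset_baseChangeCoord_eq_zero b hF
  let φ i : equivariantHom ρ ν :=
    ⟨baseChangeCoord b F i, baseChangeCoord_mem_equivariantHom b hF i⟩
  refine ⟨∑ i ∈ T, b i ⊗ₜ φ i, Subtype.ext <|
    (LinearMap.liftBaseChangeEquiv k).symm.injective <| LinearMap.ext fun m => ?_⟩
  calc (canonicalBaseChangeRes k₀ k ρ ν (∑ i ∈ T, b i ⊗ₜ φ i)).1 (1 ⊗ₜ m)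
      = ∑ i ∈ T, b i ⊗ₜ baseChangeCoord b F i m := by
        simp [canonicalBaseChangeRes, canonicalBaseChange_tmul_apply_one_tmul, φ]
    _ = F (1 ⊗ₜ m) := (eq_sum_tmul_equivFinsuppOfBasisLeft b fun i hi =>
        LinearMap.congr_fun (hT i hi) m).symm
end

section
/- Let k₀ be a field, let k be an extension field of k₀, and let Γ be a group. Let 0 → N → P → M → 0 be a short exact sequence of modules over the group algebra k₀[Γ], where M is finitely generated as a left k₀[Γ]-module. If the base-changed sequence 0 → k ⊗_{k₀} N → k ⊗_{k₀} P → k ⊗_{k₀} M → 0 of k[Γ]-modules is split, then the original sequence of k₀[Γ]-modules is split. (This is the content of the injectivity of the canonical homomorphism k ⊗_{k₀} Ext¹_{k₀[Γ]}(M, N) → Ext¹_{k[Γ]}(k ⊗_{k₀} M, k ⊗_{k₀} N) for M finitely generated.) -/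
/-!
Since `k₀` is a field, the unit map `k₀ → k` has a `k₀`-linear retraction `ℓ`. Contracting with
`ℓ` turns a `k`-linear section `s` of `k ⊗ p` into the `k₀`-linear map
`x ↦ (ℓ ⊗ id) (s (1 ⊗ x))`. This descent is compatible with composing by base-changed maps on
either side, so it preserves `Γ`-equivariance and, as `ℓ 1 = 1`, the section property.
-/

open TensorProduct

namespace TensorProduct

variable {k₀ k : Type*} [CommRing k₀] [CommRing k] [Algebra k₀ k]
  {V W : Type*} [AddCommGroup V] [Module k₀ V] [AddCommGroup W] [Module k₀ W]

noncomputable def contractScalars (ℓ : k →ₗ[k₀] k₀) (V : Type*) [AddCommGroup V] [Module k₀ V] :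
    k ⊗[k₀] V →ₗ[k₀] V :=
  (TensorProduct.lid k₀ V).toLinearMap ∘ₗ ℓ.rTensor V

@[simp]
theorem contractScalars_tmul (ℓ : k →ₗ[k₀] k₀) (c : k) (v : V) :
    contractScalars ℓ V (c ⊗ₜ v) = ℓ c • v := by
  simp [contractScalars]

theorem contractScalars_baseChange (ℓ : k →ₗ[k₀] k₀) (f : V →ₗ[k₀] W) (z : k ⊗[k₀] V) :
    contractScalars ℓ W (f.baseChange k z) = f (contractScalars ℓ V z) := by
  induction z using TensorProduct.induction_on with
  | zero => simp
  | tmul c v => simp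
  | add a b ha hb => simp only [map_add, ha, hb]

end TensorProduct

namespace LinearMap

variable {k₀ k : Type*} [CommRing k₀] [CommRing k] [Algebra k₀ k]
  {M P M' P' : Type*} [AddCommGroup M] [Module k₀ M] [AddCommGroup P] [Module k₀ P]
  [AddCommGroup M'] [Module k₀ M'] [AddCommGroup P'] [Module k₀ P']

noncomputable def descendAlong (ℓ : k →ₗ[k₀] k₀) (s : k ⊗[k₀] M →ₗ[k] k ⊗[k₀] P) :
    M →ₗ[k₀] P :=
  contractScalars ℓ P ∘ₗ s.restrictScalars k₀ ∘ₗ TensorProduct.mk k₀ k M 1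

theorem descendAlong_apply (ℓ : k →ₗ[k₀] k₀) (s : k ⊗[k₀] M →ₗ[k] k ⊗[k₀] P) (x : M) :
    descendAlong ℓ s x = contractScalars ℓ P (s (1 ⊗ₜ x)) :=
  rfl

theorem descendAlong_id (ℓ : k →ₗ[k₀] k₀) (hℓ : ℓ 1 = 1) :
    descendAlong ℓ (LinearMap.id : k ⊗[k₀] M →ₗ[k] k ⊗[k₀] M) = LinearMap.id := by
  ext x
  simp [descendAlong_apply, hℓ]

theorem comp_descendAlong (ℓ : k →ₗ[k₀] k₀) (f : P →ₗ[k₀] P') (s : k ⊗[k₀] M →ₗ[k] k ⊗[k₀] P) :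
    f ∘ₗ descendAlong ℓ s = descendAlong ℓ (f.baseChange k ∘ₗ s) := by
  ext x
  simp [descendAlong_apply, contractScalars_baseChange]

theorem descendAlong_comp (ℓ : k →ₗ[k₀] k₀) (s : k ⊗[k₀] M' →ₗ[k] k ⊗[k₀] P) (g : M →ₗ[k₀] M') :
    descendAlong ℓ s ∘ₗ g = descendAlong ℓ (s ∘ₗ g.baseChange k) := by
  ext x
  simp [descendAlong_apply]

end LinearMap

theorem statement_4_general (k₀ : Type) [Field k₀] (k : Type) [Field k] [Algebra k₀ k]
    (Γ : Type) [Group Γ]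
    (P M : Type) [AddCommGroup P] [Module k₀ P]
    [AddCommGroup M] [Module k₀ M]
    (ρP : Representation k₀ Γ P) (ρM : Representation k₀ Γ M)
    (p : P →ₗ[k₀] M)
    (hsplit : ∃ s : (k ⊗[k₀] M) →ₗ[k] (k ⊗[k₀] P),
      (∀ (γ : Γ) (x : k ⊗[k₀] M), s ((ρM.tensorUp k₀ k) γ x) = (ρP.tensorUp k₀ k) γ (s x)) ∧
      (p.baseChange k) ∘ₗ s = LinearMap.id) :
    ∃ s₀ : M →ₗ[k₀] P,
      (∀ (γ : Γ) (x : M), s₀ (ρM γ x) = ρP γ (s₀ x)) ∧ p ∘ₗ s₀ = LinearMap.id := by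
  obtain ⟨s, hs_equivariant, hs_section⟩ := hsplit
  obtain ⟨ℓ, hℓ⟩ := Module.Projective.exists_dual_eq_one k₀ (one_ne_zero : (1 : k) ≠ 0)
  refine ⟨LinearMap.descendAlong ℓ s, fun γ x => ?_, ?_⟩
  · have hs_γ : s ∘ₗ (ρM γ).baseChange k = (ρP γ).baseChange k ∘ₗ s :=
      LinearMap.ext (hs_equivariant γ)
    have h_descended : LinearMap.descendAlong ℓ s ∘ₗ ρM γ = ρP γ ∘ₗ LinearMap.descendAlong ℓ s := by
      rw [LinearMap.descendAlong_comp, hs_γ, ← LinearMap.comp_descendAlong]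
    exact LinearMap.congr_fun h_descended x
  · rw [LinearMap.comp_descendAlong, hs_section, LinearMap.descendAlong_id ℓ hℓ]

/-- let `0 → N → P → M → 0` be a short exact sequence of `k₀[Γ]`-modules
(here: representations of `Γ` with equivariant maps), with `M` finitely generated as a
`k₀[Γ]`-module.  If the base-changed sequence of `k[Γ]`-modules is split, then the original
sequence is split. -/
theorem statement_4 (k₀ : Type) [Field k₀] (k : Type) [Field k] [Algebra k₀ k]
    (Γ : Type) [Group Γ]
    (N P M : Type) [AddCommGroup N] [Module k₀ N] [AddCommGroup P] [Module k₀ P]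
    [AddCommGroup M] [Module k₀ M]
    (ρN : Representation k₀ Γ N) (ρP : Representation k₀ Γ P) (ρM : Representation k₀ Γ M)
    (i : N →ₗ[k₀] P) (p : P →ₗ[k₀] M)
    (hi : ∀ (γ : Γ) (x : N), i (ρN γ x) = ρP γ (i x))
    (hp : ∀ (γ : Γ) (x : P), p (ρP γ x) = ρM γ (p x))
    (hinj : Function.Injective i) (hsurj : Function.Surjective p)
    (hexact : LinearMap.range i = LinearMap.ker p)
    (hfg : Module.Finite (MonoidAlgebra k₀ Γ) ρM.asModule)
    (hsplit : ∃ s : (k ⊗[k₀] M) →ₗ[k] (k ⊗[k₀] P),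
      (∀ (γ : Γ) (x : k ⊗[k₀] M), s ((ρM.tensorUp k₀ k) γ x) = (ρP.tensorUp k₀ k) γ (s x)) ∧
      (p.baseChange k) ∘ₗ s = LinearMap.id) :
    ∃ s₀ : M →ₗ[k₀] P,
      (∀ (γ : Γ) (x : M), s₀ (ρM γ x) = ρP γ (s₀ x)) ∧ p ∘ₗ s₀ = LinearMap.id :=
  statement_4_general k₀ k Γ P M ρP ρM p hsplit
end

section
/- Let k be an algebraically closed field and let f ∈ k[T] be a monic polynomial of degree r ≥ 1. Then f has a root of multiplicity exactly one in k if and only if f does not divide (f′)² in k[T], where f′ denotes the derivative of f. -/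
/-!
A simple root `α` of `f` is a root of `f` but not of `f'`; since `X - α` is prime, `f ∣ f'²` would
force `X - α ∣ f'`. Conversely, a root of multiplicity `m ≥ 2` of `f` is a root of multiplicity at
least `m - 1` of `f'`, hence at least `2(m - 1) ≥ m` of `f'²`; when `f` splits, comparing root
multisets then gives `f ∣ f'²`.
-/

open Polynomial

namespace Polynomial

theorem not_dvd_derivative_sq_of_rootMultiplicity_eq_one {R : Type*} [CommRing R] [IsDomain R]
    {f : R[X]} {α : R} (h : rootMultiplicity α f = 1) : ¬ f ∣ derivative f ^ 2 := by
  intro hdvd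
  have hf : f ≠ 0 := by
    rintro rfl
    simp at h
  have hX_f : X - C α ∣ f := by simpa [h] using f.pow_rootMultiplicity_dvd α
  have hX_f' : X - C α ∣ derivative f := (prime_X_sub_C α).dvd_of_dvd_pow (hX_f.trans hdvd)
  have hmult := (one_lt_rootMultiplicity_iff_isRoot hf).2
    ⟨dvd_iff_isRoot.1 hX_f, dvd_iff_isRoot.1 hX_f'⟩
  omega

theorem roots_le_roots_derivative_sq {R : Type*} [CommRing R] [IsDomain R] {f : R[X]}
    (hf' : derivative f ≠ 0) (h : ∀ a, rootMultiplicity a f ≠ 1) :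
    f.roots ≤ (derivative f ^ 2).roots := by
  classical
  rw [roots_pow, Multiset.le_iff_count]
  intro a
  rw [Multiset.count_nsmul, count_roots, count_roots]
  have hderiv := rootMultiplicity_sub_one_le_derivative_rootMultiplicity_of_ne_zero f a hf'
  have hsimple := h a
  omega

theorem Splits.dvd_derivative_sq {K : Type*} [Field K] {f : K[X]} (hf : f.Splits)
    (h : ∀ a, rootMultiplicity a f ≠ 1) : f ∣ derivative f ^ 2 := by
  rcases eq_or_ne f 0 with rfl | hf0
  · simp
  rcases eq_or_ne (derivative f) 0 with hf' | hf'
  · simp [hf']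
  exact hf.dvd_of_roots_le_roots hf0 (roots_le_roots_derivative_sq hf' h)

theorem Splits.exists_rootMultiplicity_eq_one_iff {K : Type*} [Field K] {f : K[X]}
    (hf : f.Splits) : (∃ α, rootMultiplicity α f = 1) ↔ ¬ f ∣ derivative f ^ 2 := by
  refine ⟨fun ⟨α, hα⟩ ↦ not_dvd_derivative_sq_of_rootMultiplicity_eq_one hα, fun hndvd ↦ ?_⟩
  by_contra! h
  exact hndvd (hf.dvd_derivative_sq h)

end Polynomial

theorem statement_10_general (k : Type) [Field k] [IsAlgClosed k]
    (f : Polynomial k) :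
    (∃ α : k, Polynomial.rootMultiplicity α f = 1) ↔
      ¬ f ∣ (Polynomial.derivative f) ^ 2 :=
  (IsAlgClosed.splits f).exists_rootMultiplicity_eq_one_iff

/-- over an algebraically closed field, a monic polynomial `f` of degree `r ≥ 1`
has a root of multiplicity exactly one iff `f` does not divide the square of its derivative. -/
theorem statement_10 (k : Type) [Field k] [IsAlgClosed k] (r : ℕ) (hr : 1 ≤ r)
    (f : Polynomial k) (hmonic : f.Monic) (hdeg : f.natDegree = r) :
    (∃ α : k, Polynomial.rootMultiplicity α f = 1) ↔
      ¬ f ∣ (Polynomial.derivative f) ^ 2 :=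
  statement_10_general k f
end

section
/- Let k be an algebraically closed field and let r ≥ 1 be an integer. Then there exists a finite family Q₁, …, Q_m of polynomials over k in r² variables (indexed by the entries of an r × r matrix) such that for every matrix g ∈ Matrix(r, r, k): the characteristic polynomial of g has a root of multiplicity exactly one in k if and only if Q_j evaluated at the entries of g is nonzero for some j. In other words, the set of r × r matrices over k having an eigenvalue of multiplicity one is the complement of the common zero locus of finitely many polynomial functions of the matrix entries (a Zariski-open condition). -/
/-!
A split polynomial `p` has no simple root iff every root of `p` is also a root of `p'`, with
multiplicity at most `deg p`; so for any `n > deg p` this happens iff `p ∣ p' ^ n` (the case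
`p' = 0` being covered by `n ≥ 1`). For monic `p` of degree `r`, divisibility means that the
first `r` coefficients of `p' ^ n %ₘ p` vanish, and division by a monic polynomial commutes with
specialisation. Applied to the universal characteristic polynomial, whose coefficients are
polynomials in the matrix entries, this yields the `r` polynomials `Q j`.
-/

open Polynomial

namespace Polynomial

theorem not_dvd_derivative_pow_of_rootMultiplicity_eq_one {R : Type*} [CommRing R] [IsReduced R]
    {p : R[X]} {α : R} (hα : p.rootMultiplicity α = 1) (n : ℕ) : ¬ p ∣ derivative p ^ n := by
  have hp : p ≠ 0 := by rintro rfl; simp at hα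
  have hroot : p.IsRoot α := (rootMultiplicity_pos hp).mp (by omega)
  have hderiv : ¬ (derivative p).IsRoot α := fun h ↦ by
    have := (one_lt_rootMultiplicity_iff_isRoot hp).mpr ⟨hroot, h⟩
    omega
  intro hdvd
  have : (derivative p).eval α ^ n = 0 := by
    rw [← eval_pow]
    exact eval_eq_zero_of_dvd_of_eval_eq_zero hdvd hroot
  exact hderiv (IsReduced.eq_zero _ ⟨n, this⟩)

theorem Splits.dvd_derivative_pow_of_forall_rootMultiplicity_ne_one {K : Type*} [Field K]
    {p : K[X]} (hp : p.Splits) (hmult : ∀ α, p.rootMultiplicity α ≠ 1) {n : ℕ}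
    (hn : p.natDegree < n) : p ∣ derivative p ^ n := by
  classical
  by_cases hp' : derivative p = 0
  · rw [hp', zero_pow (by omega)]
    exact dvd_zero p
  have hp0 : p ≠ 0 := by rintro rfl; simp at hp'
  refine hp.dvd_of_roots_le_roots hp0 (Multiset.le_iff_count.mpr fun α ↦ ?_)
  rw [roots_pow, Multiset.count_nsmul, count_roots, count_roots]
  obtain h0 | hpos := Nat.eq_zero_or_pos (p.rootMultiplicity α)
  · simp [h0]
  have hderiv : 0 < (derivative p).rootMultiplicity α := by
    have h := (one_lt_rootMultiplicity_iff_isRoot (t := α) hp0).mp (by have := hmult α; omega)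
    exact (rootMultiplicity_pos hp').mpr h.2
  calc p.rootMultiplicity α ≤ p.natDegree := by
        rw [← count_roots]
        exact (Multiset.count_le_card _ _).trans (card_roots' p)
    _ ≤ n := hn.le
    _ ≤ n * (derivative p).rootMultiplicity α := Nat.le_mul_of_pos_right n hderiv

theorem Splits.exists_rootMultiplicity_eq_one_iff_not_dvd_derivative_pow {K : Type*} [Field K]
    {p : K[X]} (hp : p.Splits) {n : ℕ} (hn : p.natDegree < n) :
    (∃ α, p.rootMultiplicity α = 1) ↔ ¬ p ∣ derivative p ^ n := by
  refine ⟨fun ⟨α, hα⟩ ↦ not_dvd_derivative_pow_of_rootMultiplicity_eq_one hα n, fun h ↦ ?_⟩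
  by_contra! hmult
  exact h (hp.dvd_derivative_pow_of_forall_rootMultiplicity_ne_one hmult hn)

theorem Monic.dvd_iff_forall_coeff_modByMonic_eq_zero {R : Type*} [CommRing R] {p q : R[X]}
    (hp : p.Monic) : p ∣ q ↔ ∀ j < p.natDegree, (q %ₘ p).coeff j = 0 := by
  rw [← modByMonic_eq_zero_iff_dvd hp]
  refine ⟨fun h j _ ↦ by simp [h], fun h ↦ ext fun j ↦ ?_⟩
  rw [coeff_zero]
  by_cases hj : j < p.natDegree
  · exact h j hj
  · nontriviality R
    refine coeff_eq_zero_of_degree_lt ((degree_modByMonic_lt q hp).trans_le ?_)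
    rw [degree_eq_natDegree hp.ne_zero]
    exact_mod_cast not_lt.mp hj

end Polynomial

theorem Matrix.charpoly.univ_map_eval {R n : Type*} [CommRing R] [Fintype n] [DecidableEq n]
    (g : Matrix n n R) :
    (Matrix.charpoly.univ R n).map (MvPolynomial.eval fun p ↦ g p.1 p.2) = g.charpoly :=
  univ_map_eval₂Hom n (RingHom.id R) _

theorem statement_12_general (k : Type) [Field k] [IsAlgClosed k] (r : ℕ) :
    ∃ (m : ℕ) (Q : Fin m → MvPolynomial (Fin r × Fin r) k),
      ∀ g : Matrix (Fin r) (Fin r) k,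
        (∃ α : k, Polynomial.rootMultiplicity α (Matrix.charpoly g) = 1) ↔
          ∃ j : Fin m, MvPolynomial.eval (fun p => g p.1 p.2) (Q j) ≠ 0 := by
  set P := Matrix.charpoly.univ k (Fin r)
  refine ⟨r, fun j ↦ ((derivative P ^ (r + 1)) %ₘ P).coeff j, fun g ↦ ?_⟩
  have hQ (j : ℕ) :
      MvPolynomial.eval (fun p ↦ g p.1 p.2) (((derivative P ^ (r + 1)) %ₘ P).coeff j) =
        ((derivative g.charpoly ^ (r + 1)) %ₘ g.charpoly).coeff j := by
    rw [← Matrix.charpoly.univ_map_eval g, ← coeff_map,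
      map_modByMonic _ (Matrix.charpoly.univ_monic k (Fin r)), Polynomial.map_pow, derivative_map]
  have hdeg : g.charpoly.natDegree = r := by simp [Matrix.charpoly_natDegree_eq_dim]
  rw [(IsAlgClosed.splits _).exists_rootMultiplicity_eq_one_iff_not_dvd_derivative_pow
      (n := r + 1) (by omega),
    (Matrix.charpoly_monic g).dvd_iff_forall_coeff_modByMonic_eq_zero, hdeg]
  simp [hQ, Fin.exists_iff]

/-- over an algebraically closed field, having an eigenvalue of multiplicity one
(i.e. the characteristic polynomial has a root of multiplicity exactly one) is a Zariski-open
condition on `r × r` matrices: it is the nonvanishing locus of finitely many polynomials in the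
matrix entries. -/
theorem statement_12 (k : Type) [Field k] [IsAlgClosed k] (r : ℕ) (hr : 1 ≤ r) :
    ∃ (m : ℕ) (Q : Fin m → MvPolynomial (Fin r × Fin r) k),
      ∀ g : Matrix (Fin r) (Fin r) k,
        (∃ α : k, Polynomial.rootMultiplicity α (Matrix.charpoly g) = 1) ↔
          ∃ j : Fin m, MvPolynomial.eval (fun p => g p.1 p.2) (Q j) ≠ 0 :=
  statement_12_general k r
end
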